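/- arXiv:2012.05682 — 11 statements merged into one kernel-verified Lean document; each statement's English description precedes it below -/
import Mathlib

section
/- The relation R^mix ⊆ ℚ³ is preserved by the binary minimum operation min : ℚ × ℚ → ℚ, i.e., if (a₁,b₁,c₁), (a₂,b₂,c₂) ∈ R^mix then (min(a₁,a₂), min(b₁,b₂), min(c₁,c₂)) ∈ R^mix. -/
def Rmix (a b c : ℚ) : Prop := a = b ∨ (c < a ∧ c < b)

theorem stmt_1 :
    ∀ a₁ b₁ c₁ a₂ b₂ c₂ : ℚ, Rmix a₁ b₁ c₁ → Rmix a₂ b₂ c₂ →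
      Rmix (min a₁ a₂) (min b₁ b₂) (min c₁ c₂) := by
  intro a₁ b₁ c₁ a₂ b₂ c₂ h1 h2
  rcases h1 with h1 | ⟨h1a, h1b⟩ <;> rcases h2 with h2 | ⟨h2a, h2b⟩
  · left; rw [h1, h2]
  · subst h1
    by_cases hc : c₂ < a₁
    · right
      exact ⟨(min_le_right c₁ c₂).trans_lt (lt_min hc h2a),
             (min_le_right c₁ c₂).trans_lt (lt_min hc h2b)⟩
    · push_neg at hc
      left
      rw [min_eq_left (hc.trans h2a.le), min_eq_left (hc.trans h2b.le)]
  · subst h2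
    by_cases hc : c₁ < a₂
    · right
      exact ⟨(min_le_left c₁ c₂).trans_lt (lt_min h1a hc),
             (min_le_left c₁ c₂).trans_lt (lt_min h1b hc)⟩
    · push_neg at hc
      left
      rw [min_eq_right (hc.trans h1a.le), min_eq_right (hc.trans h1b.le)]
  · right
    constructor
    · exact lt_min ((min_le_left c₁ c₂).trans_lt h1a) ((min_le_right c₁ c₂).trans_lt h2a)
    · exact lt_min ((min_le_left c₁ c₂).trans_lt h1b) ((min_le_right c₁ c₂).trans_lt h2b)
end

section
/- No binary injective operation f : ℚ² → ℚ that preserves the order < (i.e., is strictly increasing in the componentwise order) preserves R^mix. More precisely, if f : ℚ² → ℚ is injective and satisfies f(a,b) < f(a',b') whenever a < a' and b < b', then f does not preserve R^mix. -/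
theorem stmt_2 :
    ∀ f : ℚ → ℚ → ℚ,
      Function.Injective (fun p : ℚ × ℚ => f p.1 p.2) →
      (∀ a b a' b' : ℚ, a < a' → b < b' → f a b < f a' b') →
      ¬ (∀ a₁ b₁ c₁ a₂ b₂ c₂ : ℚ, Rmix a₁ b₁ c₁ → Rmix a₂ b₂ c₂ →
          Rmix (f a₁ a₂) (f b₁ b₂) (f c₁ c₂)) := by
  intro f hinj _ hpres
  have h1 : Rmix (f 0 1) (f 0 2) (f 1 0) :=
    hpres 0 0 1 1 2 0 (Or.inl rfl) (Or.inr ⟨by norm_num, by norm_num⟩)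
  have h2 : Rmix (f 1 0) (f 2 0) (f 0 1) :=
    hpres 1 2 0 0 0 1 (Or.inr ⟨by norm_num, by norm_num⟩) (Or.inl rfl)
  have ne1 : f 0 1 ≠ f 0 2 := by
    intro h
    have := hinj (a₁ := (0,1)) (a₂ := (0,2)) h
    simp at this
  have ne2 : f 1 0 ≠ f 2 0 := by
    intro h
    have := hinj (a₁ := (1,0)) (a₂ := (2,0)) h
    simp at this
  rcases h1 with h | h
  · exact ne1 h
  rcases h2 with h' | h'
  · exact ne2 h'
  exact absurd h.1 (not_lt.2 h'.1.le)
end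

section
/- For every n ≥ 3, a triple/tuple (a₁,…,aₙ) ∈ ℚⁿ belongs to R^mix_n if and only if there exists h ∈ ℚ such that (a₁, h, a₃, …, a_{n-1}) ∈ R^mix_{n-1} and (h, a₂, aₙ) ∈ R^mix_3, for n ≥ 4. (In other words, R^mix_n(x₁,…,xₙ) is equivalent to ∃h. R^mix_{n-1}(x₁,h,x₃,…,x_{n-1}) ∧ R^mix_3(h,x₂,xₙ).) -/
/-- The `n`-ary generalisation `R^mix_n` (coordinates indexed from 0): if every
coordinate with 0-based index `≥ 2` is at least `min(a₀,a₁)`, then `a₀ = a₁`. -/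
def RmixN (n : ℕ) (hn : 3 ≤ n) (a : Fin n → ℚ) : Prop :=
  (∀ i : Fin n, 2 ≤ i.val → min (a ⟨0, by omega⟩) (a ⟨1, by omega⟩) ≤ a i) →
    a ⟨0, by omega⟩ = a ⟨1, by omega⟩

theorem stmt_3 (n : ℕ) (hn : 4 ≤ n) (a : Fin n → ℚ) :
    RmixN n (by omega) a ↔
      ∃ h : ℚ,
        RmixN (n - 1) (by omega)
          (fun i : Fin (n - 1) => if i.val = 1 then h else a (Fin.castLE (by omega) i)) ∧
        RmixN 3 (by omega) ![h, a ⟨1, by omega⟩, a ⟨n - 1, by omega⟩] := by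
  have h0 : (0 : ℕ) < n := by omega
  have h1 : (1 : ℕ) < n := by omega
  have hn1 : n - 1 < n := by omega
  constructor
  · intro R
    by_cases P : ∀ i : Fin n, 2 ≤ i.val → min (a ⟨0, h0⟩) (a ⟨1, h1⟩) ≤ a i
    · refine ⟨a ⟨1, h1⟩, ?_, ?_⟩
      · intro _
        simp only [RmixN]
        simpa using R P
      · intro _
        rfl
    · push_neg at P
      obtain ⟨i, hi2, hlt⟩ := P
      by_cases hi : i.val ≤ n - 2
      · refine ⟨a ⟨1, h1⟩, ?_, ?_⟩
        · intro H
          exfalso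
          have := H ⟨i.val, by omega⟩ hi2
          simp only [show i.val ≠ 1 by omega, if_neg, if_pos, reduceIte] at this
          have hcast : Fin.castLE (by omega : n - 1 ≤ n) ⟨i.val, by omega⟩ = i := by
            ext; rfl
          rw [hcast] at this
          exact absurd this (not_le.mpr hlt)
        · intro _
          rfl
      · -- i.val = n - 1
        have hival : i.val = n - 1 := by omega
        have hieq : i = ⟨n - 1, hn1⟩ := Fin.ext hival
        refine ⟨a ⟨0, h0⟩, ?_, ?_⟩
        · intro _
          rfl
        · intro H
          exfalso
          have h23 : (2 : ℕ) < 3 := by norm_num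
          have : min (a ⟨0, h0⟩) (a ⟨1, h1⟩) ≤ a ⟨n - 1, hn1⟩ := H ⟨2, h23⟩ (le_refl 2)
          rw [hieq] at hlt
          exact absurd this (not_le.mpr hlt)
  · rintro ⟨h, A, B⟩
    intro P
    simp only [RmixN] at A B
    have B' : min h (a ⟨1, h1⟩) ≤ a ⟨n - 1, hn1⟩ → h = a ⟨1, h1⟩ := by
      intro hm
      apply B
      intro j hj2
      have : j = ⟨2, by norm_num⟩ := Fin.ext (show j.val = 2 by omega)
      subst this
      exact hm
    by_cases hc : min (a ⟨0, h0⟩) h ≤ min (a ⟨0, h0⟩) (a ⟨1, h1⟩)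
    · have hA : a ⟨0, h0⟩ = h := by
        have := A ?_
        · simpa using this
        · intro j hj2
          have hj1 : j.val ≠ 1 := by omega
          simp only [hj1, if_neg, reduceIte]
          refine le_trans ?_ (P (Fin.castLE (by omega) j) hj2)
          simpa using hc
      have := B' (by
        rw [← hA]
        exact P ⟨n - 1, hn1⟩ (show (2 : ℕ) ≤ n - 1 by omega))
      rw [hA, this]
    · push_neg at hc
      have ha1 : a ⟨1, h1⟩ < h := by
        have hAh := lt_of_lt_of_le hc (min_le_right (a ⟨0, h0⟩) h)
        have hA0 := lt_of_lt_of_le hc (min_le_left (a ⟨0, h0⟩) h)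
        rcases min_cases (a ⟨0, h0⟩) (a ⟨1, h1⟩) with ⟨he, hle⟩ | ⟨he, hle⟩ <;>
          rw [he] at hAh hA0 <;> linarith
      have ha0 : a ⟨1, h1⟩ < a ⟨0, h0⟩ := by
        have hAh := lt_of_lt_of_le hc (min_le_right (a ⟨0, h0⟩) h)
        have hA0 := lt_of_lt_of_le hc (min_le_left (a ⟨0, h0⟩) h)
        rcases min_cases (a ⟨0, h0⟩) (a ⟨1, h1⟩) with ⟨he, hle⟩ | ⟨he, hle⟩ <;>
          rw [he] at hAh hA0 <;> linarith
      have hP := P ⟨n - 1, hn1⟩ (show (2 : ℕ) ≤ n - 1 by omega)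
      have hmin : min h (a ⟨1, h1⟩) ≤ a ⟨n - 1, hn1⟩ := by
        rw [min_eq_right ha1.le]
        calc a ⟨1, h1⟩ = min (a ⟨0, h0⟩) (a ⟨1, h1⟩) := (min_eq_right ha0.le).symm
          _ ≤ _ := hP
      exact absurd (B' hmin) (by linarith)
end

section
/- The formula ∃h. X(z,z,h) ∧ X(x,y,h) defines R^mix over ℚ, where X = {(a,b,c) ∈ ℚ³ | (a=b<c) ∨ (a=c<b) ∨ (b=c<a)}. That is, (a,b,c) ∈ R^mix if and only if there exists h ∈ ℚ with (c,c,h) ∈ X and (a,b,h) ∈ X. -/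
def X (x y z : ℚ) : Prop := (x = y ∧ x < z) ∨ (x = z ∧ x < y) ∨ (y = z ∧ y < x)

theorem stmt_7 : ∀ a b c : ℚ, Rmix a b c ↔ ∃ h : ℚ, X c c h ∧ X a b h := by
  intro a b c
  constructor
  · rintro (rfl | ⟨hca, hcb⟩)
    · exact ⟨max a c + 1, Or.inl ⟨rfl, by linarith [le_max_left a c, le_max_right a c]⟩,
        Or.inl ⟨rfl, by linarith [le_max_left a c, le_max_right a c]⟩⟩
    · rcases eq_or_ne a b with rfl | hab
      · exact ⟨max a c + 1, Or.inl ⟨rfl, by linarith [le_max_left a c, le_max_right a c]⟩,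
          Or.inl ⟨rfl, by linarith [le_max_left a c, le_max_right a c]⟩⟩
      · refine ⟨min a b, Or.inl ⟨rfl, by simp [lt_min_iff, hca, hcb]⟩, ?_⟩
        rcases lt_or_gt_of_ne hab with h | h
        · exact Or.inr (Or.inl ⟨(min_eq_left h.le).symm, h⟩)
        · exact Or.inr (Or.inr ⟨(min_eq_right h.le).symm, h⟩)
  · rintro ⟨h, hc, hab⟩
    have hch : c < h := by
      rcases hc with ⟨_, h1⟩ | ⟨h1, h2⟩ | ⟨h1, h2⟩ <;> [exact h1; exact absurd h2 (lt_irrefl _); exact absurd h2 (lt_irrefl _)]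
    rcases hab with ⟨h1, _⟩ | ⟨h1, h2⟩ | ⟨h1, h2⟩
    · exact Or.inl h1
    · exact Or.inr ⟨h1 ▸ hch, lt_trans (h1 ▸ hch) h2⟩
    · exact Or.inr ⟨lt_trans (h1 ▸ hch) h2, h1 ▸ hch⟩
end

section
/- The relation R^mi = {(a,b,c) ∈ ℚ³ | a ≥ b ∨ a > c} is preserved by the binary minimum operation on ℚ. -/
def Rmi (a b c : ℚ) : Prop := a ≥ b ∨ a > c

theorem stmt_9 :
    ∀ a₁ b₁ c₁ a₂ b₂ c₂ : ℚ, Rmi a₁ b₁ c₁ → Rmi a₂ b₂ c₂ →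
      Rmi (min a₁ a₂) (min b₁ b₂) (min c₁ c₂) := by
  intro a₁ b₁ c₁ a₂ b₂ c₂ h1 h2
  rcases h1 with h1 | h1 <;> rcases h2 with h2 | h2
  · exact Or.inl (min_le_min h1 h2)
  · rcases le_total a₁ a₂ with h | h
    · left; rw [min_eq_left h]; exact (min_le_left _ _).trans h1
    · right; rw [min_eq_right h]; exact (min_le_right _ _).trans_lt h2
  · rcases le_total a₂ a₁ with h | h
    · left; rw [min_eq_right h]; exact (min_le_right _ _).trans h2
    · right; rw [min_eq_left h]; exact (min_le_left _ _).trans_lt h1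
  · exact Or.inr (lt_min ((min_le_left _ _).trans_lt h1) ((min_le_right _ _).trans_lt h2))
end

section
/- The formula ψ(x,y,z) := ∃u,v. (T₃(x,u,v) ∧ u ≠ y ∧ v ≥ z) defines the relation S^mi = {(x,y,z) ∈ ℚ³ | x ≠ y ∨ x ≥ z} over ℚ, where T₃ = {(x,y,z) ∈ ℚ³ | (x=y<z) ∨ (x=z<y)}. -/
def T₃ (x y z : ℚ) : Prop := (x = y ∧ x < z) ∨ (x = z ∧ x < y)

theorem stmt_13 :
    ∀ x y z : ℚ, (x ≠ y ∨ x ≥ z) ↔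
      ∃ u v : ℚ, T₃ x u v ∧ u ≠ y ∧ v ≥ z := by
  intro x y z
  constructor
  · rintro (h | h)
    · exact ⟨x, max z x + 1, Or.inl ⟨rfl, lt_of_le_of_lt (le_max_right _ _) (by linarith)⟩,
        h, le_trans (le_max_left _ _) (by linarith)⟩
    · exact ⟨max x y + 1, x, Or.inr ⟨rfl, lt_of_le_of_lt (le_max_left _ _) (by linarith)⟩,
        by have := le_max_right x y; intro hu; linarith [hu ▸ this], h⟩
  · rintro ⟨u, v, (⟨rfl, _⟩ | ⟨rfl, _⟩), hu, hv⟩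
    · exact Or.inl hu
    · exact Or.inr hv
end

section
/- The relation R^mix is not preserved by any binary operation lex : ℚ² → ℚ inducing the lexicographic order on ℚ², i.e., any lex satisfying lex(a,b) < lex(a',b') iff (a < a' or (a = a' and b < b')). -/
theorem stmt_14 :
    ∀ lex : ℚ → ℚ → ℚ,
      (∀ a b a' b' : ℚ, lex a b < lex a' b' ↔ (a < a' ∨ (a = a' ∧ b < b'))) →
      ¬ (∀ a₁ b₁ c₁ a₂ b₂ c₂ : ℚ, Rmix a₁ b₁ c₁ → Rmix a₂ b₂ c₂ →
          Rmix (lex a₁ a₂) (lex b₁ b₂) (lex c₁ c₂)) := by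
  intro lex hlex h
  have h1 : Rmix 0 0 1 := Or.inl rfl
  have h2 : Rmix 2 3 0 := Or.inr ⟨by norm_num, by norm_num⟩
  have := h 0 0 1 2 3 0 h1 h2
  have hlt : lex 0 2 < lex 0 3 := (hlex 0 2 0 3).2 (Or.inr ⟨rfl, by norm_num⟩)
  rcases this with he | ⟨hc, _⟩
  · exact absurd he (ne_of_lt hlt)
  · have := (hlex 1 0 0 2).1 hc
    rcases this with h' | ⟨h', _⟩ <;> norm_num at h'
end

section
/- Let f : ℚⁿ → ℚ (n ≥ 2) be an operation preserving < (strictly increasing componentwise) such that for every a ∈ ℚⁿ there is an index i with f constant on H(a,i), where H(a,i) = {b ∈ ℚⁿ | b_i = a_i and b_j > a_j for all j ≠ i}. If i is such that f is constant on H(a,i), and b ∈ ℚⁿ satisfies b_i < a_i and b_k > a_k for all k ≠ i, then the only index j for which f is constant on H(b,j) is j = i. -/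
/-- `H a i` is the set of tuples agreeing with `a` at `i` and strictly larger elsewhere. -/
def Hset {n : ℕ} (a : Fin n → ℚ) (i : Fin n) : Set (Fin n → ℚ) :=
  {b | b i = a i ∧ ∀ j : Fin n, j ≠ i → a j < b j}

/-- `f` is constant on a set `S`. -/
def ConstOn {n : ℕ} (f : (Fin n → ℚ) → ℚ) (S : Set (Fin n → ℚ)) : Prop :=
  ∀ u ∈ S, ∀ v ∈ S, f u = f v

theorem stmt_15 (n : ℕ) (hn : 2 ≤ n) (f : (Fin n → ℚ) → ℚ)
    (hmono : ∀ a b : Fin n → ℚ, (∀ k, a k < b k) → f a < f b)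
    (hK : ∀ a : Fin n → ℚ, ∃ i : Fin n, ConstOn f (Hset a i))
    (a : Fin n → ℚ) (i : Fin n) (hi : ConstOn f (Hset a i))
    (b : Fin n → ℚ) (hbi : b i < a i) (hbk : ∀ k : Fin n, k ≠ i → a k < b k) :
    ∀ j : Fin n, ConstOn f (Hset b j) ↔ j = i := by
  have key : ∀ j : Fin n, j ≠ i → ¬ ConstOn f (Hset b j) := by
    intro j hji hj
    have habj : a j < b j := hbk j hji
    -- first pair: u ∈ H(a,i) componentwise below v ∈ H(b,j)
    set u : Fin n → ℚ := fun k =>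
      if k = i then a i else if k = j then (a j + b j)/2 else a k + 1 with hu
    set v : Fin n → ℚ := fun k =>
      if k = j then b j else if k = i then a i + 1 else max (a k) (b k) + 2 with hv
    -- second pair: u' ∈ H(a,i) componentwise above v' ∈ H(b,j)
    set u' : Fin n → ℚ := fun k =>
      if k = i then a i else max (a k) (b k) + 2 with hu'
    set v' : Fin n → ℚ := fun k =>
      if k = j then b j else if k = i then (a i + b i)/2 else max (a k) (b k) + 1 with hv'
    have hu_mem : u ∈ Hset a i := by
      constructor
      · simp [hu]
      · intro k hk
        simp only [hu, if_neg hk]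
        by_cases hkj : k = j
        · rw [if_pos hkj, hkj]; linarith
        · rw [if_neg hkj]; linarith
    have hu'_mem : u' ∈ Hset a i := by
      constructor
      · simp [hu']
      · intro k hk
        simp only [hu', if_neg hk]
        have := le_max_left (a k) (b k)
        linarith
    have hv_mem : v ∈ Hset b j := by
      constructor
      · simp [hv]
      · intro k hk
        simp only [hv, if_neg hk]
        by_cases hki : k = i
        · rw [if_pos hki, hki]; linarith
        · rw [if_neg hki]
          have := le_max_right (a k) (b k)
          linarith
    have hv'_mem : v' ∈ Hset b j := by
      constructor
      · simp [hv']
      · intro k hk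
        simp only [hv', if_neg hk]
        by_cases hki : k = i
        · rw [if_pos hki, hki]; linarith
        · rw [if_neg hki]
          have := le_max_right (a k) (b k)
          linarith
    have h1 : f u < f v := by
      apply hmono
      intro k
      simp only [hu, hv]
      by_cases hki : k = i
      · have hkj : k ≠ j := by rw [hki]; exact Ne.symm hji
        rw [if_pos hki, if_neg hkj, if_pos hki]
        linarith
      · by_cases hkj : k = j
        · rw [if_neg hki, if_pos hkj, if_pos hkj]; linarith
        · rw [if_neg hki, if_neg hkj, if_neg hkj, if_neg hki]
          have := le_max_left (a k) (b k)
          linarith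
    have h2 : f v' < f u' := by
      apply hmono
      intro k
      simp only [hu', hv']
      by_cases hki : k = i
      · have hkj : k ≠ j := by rw [hki]; exact Ne.symm hji
        rw [if_pos hki, if_neg hkj, if_pos hki]
        linarith
      · by_cases hkj : k = j
        · rw [if_pos hkj, if_neg hki, hkj]
          have := le_max_right (a j) (b j)
          linarith
        · rw [if_neg hki, if_neg hkj, if_neg hki]
          linarith
    have e1 : f u = f u' := hi u hu_mem u' hu'_mem
    have e2 : f v = f v' := hj v hv_mem v' hv'_mem
    linarith
  intro j
  constructor
  · intro hj
    by_contra hji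
    exact key j hji hj
  · rintro rfl
    obtain ⟨i', hi'⟩ := hK b
    have h : i' = j := by
      by_contra h
      exact key i' h hi'
    rwa [h] at hi'
end

section
/- Let f : ℚⁿ → ℚ (n ≥ 2) preserve < and suppose for every a ∈ ℚⁿ the set I_f(a) = {i | f is constant on H(a,i)} is nonempty. If i ∈ I_f(a) and b ∈ ℚⁿ satisfies b_i ≤ a_i and b_k ≥ a_k for all k ≠ i, then i ∈ I_f(b). -/
theorem stmt_16 (n : ℕ) (hn : 2 ≤ n) (f : (Fin n → ℚ) → ℚ)
    (hmono : ∀ a b : Fin n → ℚ, (∀ k, a k < b k) → f a < f b)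
    (hK : ∀ a : Fin n → ℚ, ∃ i : Fin n, ConstOn f (Hset a i))
    (a : Fin n → ℚ) (i : Fin n) (hi : ConstOn f (Hset a i))
    (b : Fin n → ℚ) (hbi : b i ≤ a i) (hbk : ∀ k : Fin n, k ≠ i → a k ≤ b k) :
    ConstOn f (Hset b i) := by
  -- m has m i = a i and m j = b j for j ≠ i
  set m : Fin n → ℚ := fun j => if j = i then a i else b j with hm_def
  have hmem : ∀ x ∈ Hset b i, True := fun _ _ => trivial
  have hsub : Hset m i ⊆ Hset a i := by
    intro x hx
    obtain ⟨hx1, hx2⟩ := hx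
    constructor
    · simpa [hm_def] using hx1
    · intro j hj
      have := hx2 j hj
      simp only [hm_def, if_neg hj] at this
      exact lt_of_le_of_lt (hbk j hj) this
  have hm : ConstOn f (Hset m i) := fun u hu v hv => hi u (hsub hu) v (hsub hv)
  rcases eq_or_lt_of_le hbi with heq | hlt
  · -- b i = a i : then m = b essentially, Hset b i ⊆ Hset a i
    have hsub2 : Hset b i ⊆ Hset m i := by
      intro x hx
      obtain ⟨hx1, hx2⟩ := hx
      refine ⟨by simp [hm_def, hx1, heq], ?_⟩
      intro j hj
      simpa [hm_def, if_neg hj] using hx2 j hj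
    exact fun u hu v hv => hm u (hsub2 hu) v (hsub2 hv)
  · intro u hu v hv
    obtain ⟨hu1, hu2⟩ := hu
    obtain ⟨hv1, hv2⟩ := hv
    -- p below both u and v within Hset b i
    set p : Fin n → ℚ := fun j => if j = i then b i else (b j + min (u j) (v j)) / 2
      with hp_def
    have hpj : ∀ j, j ≠ i → b j < p j ∧ p j < u j ∧ p j < v j := by
      intro j hj
      have h1 := hu2 j hj
      have h2 := hv2 j hj
      have hmin : b j < min (u j) (v j) := lt_min h1 h2
      have hmu : min (u j) (v j) ≤ u j := min_le_left _ _
      have hmv : min (u j) (v j) ≤ v j := min_le_right _ _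
      simp only [hp_def, if_neg hj]
      constructor
      · linarith
      constructor
      · linarith
      · linarith
    have hpi : p i = b i := by simp [hp_def]
    have hup : u ∈ Hset p i := ⟨by rw [hu1, hpi], fun j hj => (hpj j hj).2.1⟩
    have hvp : v ∈ Hset p i := ⟨by rw [hv1, hpi], fun j hj => (hpj j hj).2.2⟩
    obtain ⟨k, hk⟩ := hK p
    by_cases hki : k = i
    · subst hki
      exact hk u hup v hvp
    · exfalso
      -- build q, q' in Hset p k with f q < c < f q' where c is the value on Hset m i
      set q : Fin n → ℚ := fun j =>
        if j = k then p k else if j = i then (b i + a i) / 2 else p j + 1 with hq_def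
      set w : Fin n → ℚ := fun j => if j = i then a i else q j + 1 with hw_def
      set q' : Fin n → ℚ := fun j =>
        if j = k then p k else if j = i then a i + 1 else p j + 1 with hq'_def
      set w' : Fin n → ℚ := fun j =>
        if j = i then a i else if j = k then (b k + p k) / 2 else p j + 1 / 2 with hw'_def
      have hbk_lt : b k < p k := (hpj k hki).1
      have hqmem : q ∈ Hset p k := by
        refine ⟨by simp [hq_def], ?_⟩
        intro j hj
        simp only [hq_def, if_neg hj]
        by_cases hji : j = i
        · subst hji
          rw [if_pos rfl, hpi]
          linarith
        · rw [if_neg hji]; linarith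
      have hq'mem : q' ∈ Hset p k := by
        refine ⟨by simp [hq'_def], ?_⟩
        intro j hj
        simp only [hq'_def, if_neg hj]
        by_cases hji : j = i
        · subst hji
          rw [if_pos rfl, hpi]
          linarith
        · rw [if_neg hji]; linarith
      have hwmem : w ∈ Hset m i := by
        refine ⟨by simp [hw_def, hm_def], ?_⟩
        intro j hj
        have hb := (hpj j hj).1
        simp only [hw_def, hm_def, hq_def, if_neg hj]
        by_cases hjk : j = k
        · rw [if_pos hjk, hjk]; linarith
        · rw [if_neg hjk]; linarith
      have hw'mem : w' ∈ Hset m i := by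
        refine ⟨by simp [hw'_def, hm_def], ?_⟩
        intro j hj
        have hb := (hpj j hj).1
        simp only [hw'_def, hm_def, if_neg hj]
        by_cases hjk : j = k
        · rw [if_pos hjk, hjk]; linarith
        · rw [if_neg hjk]; linarith
      have hqw : ∀ j, q j < w j := by
        intro j
        simp only [hw_def, hq_def]
        by_cases hji : j = i
        · rw [if_pos hji, if_neg (fun h => hki (h.symm.trans hji)), if_pos hji]
          linarith
        · simp only [if_neg hji]; linarith
      have hw'q' : ∀ j, w' j < q' j := by
        intro j
        simp only [hw'_def, hq'_def]
        by_cases hji : j = i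
        · rw [if_pos hji, if_neg (fun h => hki (h.symm.trans hji)), if_pos hji]
          linarith
        · simp only [if_neg hji]
          by_cases hjk : j = k
          · simp only [if_pos hjk]; linarith
          · simp only [if_neg hjk]; linarith
      have h1 : f q < f w := hmono q w hqw
      have h2 : f w' < f q' := hmono w' q' hw'q'
      have h3 : f w = f w' := hm w hwmem w' hw'mem
      have h4 : f q = f q' := hk q hqmem q' hq'mem
      linarith
end

section
/- Let f : ℚⁿ → ℚ preserve < (strictly increasing componentwise) and suppose there is a fixed index i such that for every a ∈ ℚⁿ, f is constant on H(a,i) and on no other H(a,j) for j ≠ i. Then f depends only on its i-th coordinate: for all a, b ∈ ℚⁿ with a_i = b_i, f(a) = f(b). -/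
theorem stmt_17 (n : ℕ) (f : (Fin n → ℚ) → ℚ)
    (hmono : ∀ a b : Fin n → ℚ, (∀ k, a k < b k) → f a < f b)
    (i : Fin n)
    (hi : ∀ a : Fin n → ℚ, ConstOn f (Hset a i) ∧
      ∀ j : Fin n, j ≠ i → ¬ ConstOn f (Hset a j)) :
    ∀ a b : Fin n → ℚ, a i = b i → f a = f b := by
  intro a b hab
  set c : Fin n → ℚ := fun j => if j = i then a i else min (a j) (b j) - 1 with hc
  have ha : a ∈ Hset c i := by
    refine ⟨by simp [hc], fun j hj => ?_⟩
    simp only [hc, if_neg hj]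
    have := min_le_left (a j) (b j)
    linarith
  have hb : b ∈ Hset c i := by
    refine ⟨by simp [hc, hab], fun j hj => ?_⟩
    simp only [hc, if_neg hj]
    have := min_le_right (a j) (b j)
    linarith
  exact (hi c).1 a ha b hb
end

section
/- Suppose f : ℚ² → ℚ preserves R^mix = {(a,b,c) ∈ ℚ³ | a=b ∨ (c<a ∧ c<b)} and preserves <. Then f ∈ 𝒦, i.e., for every (a₁,a₂) ∈ ℚ² either f is constant on {(a₁,y) | y > a₂} or f is constant on {(x,a₂) | x > a₁}. -/
theorem stmt_19 (f : ℚ → ℚ → ℚ)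
    (hpres : ∀ a₁ b₁ c₁ a₂ b₂ c₂ : ℚ, Rmix a₁ b₁ c₁ → Rmix a₂ b₂ c₂ →
      Rmix (f a₁ a₂) (f b₁ b₂) (f c₁ c₂))
    (hmono : ∀ a b a' b' : ℚ, a < a' → b < b' → f a b < f a' b') :
    ∀ a₁ a₂ : ℚ,
      (∀ y y' : ℚ, a₂ < y → a₂ < y' → f a₁ y = f a₁ y') ∨
      (∀ x x' : ℚ, a₁ < x → a₁ < x' → f x a₂ = f x' a₂) := by
  intro a₁ a₂
  by_contra h
  push_neg at h
  obtain ⟨⟨y₁, y₂, hy₁, hy₂, hyne⟩, ⟨x₁, x₂, hx₁, hx₂, hxne⟩⟩ := h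
  set d : ℚ := (a₂ + min y₁ y₂) / 2 with hd
  set e : ℚ := (a₁ + min x₁ x₂) / 2 with he
  have hmy : a₂ < min y₁ y₂ := lt_min hy₁ hy₂
  have hmx : a₁ < min x₁ x₂ := lt_min hx₁ hx₂
  have hd1 : a₂ < d := by rw [hd]; linarith
  have hdy₁ : d < y₁ := by
    have := min_le_left y₁ y₂
    rw [hd]; linarith
  have hdy₂ : d < y₂ := by
    have := min_le_right y₁ y₂
    rw [hd]; linarith
  have he1 : a₁ < e := by rw [he]; linarith
  have hex₁ : e < x₁ := by
    have := min_le_left x₁ x₂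
    rw [he]; linarith
  have hex₂ : e < x₂ := by
    have := min_le_right x₁ x₂
    rw [he]; linarith
  -- Fact 3: for all c, f c d < f a₁ y₁
  have h3 : ∀ c : ℚ, f c d < f a₁ y₁ := by
    intro c
    rcases hpres a₁ a₁ c y₁ y₂ d (Or.inl rfl) (Or.inr ⟨hdy₁, hdy₂⟩) with h | h
    · exact absurd h hyne
    · exact h.1
  -- Fact 4: for all d', f e d' < f x₁ a₂
  have h4 : ∀ d' : ℚ, f e d' < f x₁ a₂ := by
    intro d'
    rcases hpres x₁ x₂ e a₂ a₂ d' (Or.inr ⟨hex₁, hex₂⟩) (Or.inl rfl) with h | h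
    · exact absurd h hxne
    · exact h.1
  have c1 : f a₁ y₁ < f e (y₁ + 1) := hmono a₁ y₁ e (y₁ + 1) he1 (by linarith)
  have c2 : f e (y₁ + 1) < f x₁ a₂ := h4 (y₁ + 1)
  have c3 : f x₁ a₂ < f (x₁ + 1) d := hmono x₁ a₂ (x₁ + 1) d (by linarith) hd1
  have c4 : f (x₁ + 1) d < f a₁ y₁ := h3 (x₁ + 1)
  linarith
end
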